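/- The graph K_20 obtained from G_20 by adding the edges {x, y_0}, {x, y_1}, {y_0, y_1} and then contracting the edge {y_0, y_1} is isomorphic to the complete graph on 20 vertices. -/

import Mathlib

/-- Vertices of `G₂₀`: numbers `0,…,17`, with `x = inr 0`, `y₀ = inr 1`, `y₁ = inr 2`. -/
abbrev V20 := ZMod 18 ⊕ Fin 3

def g20rel : V20 → V20 → Prop
  | .inl i, .inl j => i ≠ j
  | .inl i, .inr a => a = 0 ∨ (a = 1 ∧ Even i.val) ∨ (a = 2 ∧ ¬ Even i.val)
  | .inr a, .inl i => a = 0 ∨ (a = 1 ∧ Even i.val) ∨ (a = 2 ∧ ¬ Even i.val)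
  | .inr _, .inr _ => False

def G20 : SimpleGraph V20 := SimpleGraph.fromRel g20rel

/-- `G₂₀` together with the three added edges `{x,y₀}, {x,y₁}, {y₀,y₁}`. -/
def G20plus : SimpleGraph V20 :=
  G20 ⊔ SimpleGraph.fromRel (fun u v => u.isRight ∧ v.isRight)

/-- Vertices after contracting `{y₀, y₁}`: numbers, `x = inr 0`, and `y = inr 1`. -/
abbrev V20c := ZMod 18 ⊕ Fin 2

/-- The quotient map identifying `y₀` and `y₁` to `y`. -/
def contractMap : V20 → V20c
  | .inl i => .inl i
  | .inr a => if a = 0 then .inr 0 else .inr 1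

/-- The graph obtained from `G20plus` by contracting the edge `{y₀, y₁}`. -/
def K20 : SimpleGraph V20c :=
  SimpleGraph.fromRel
    (fun a b => ∃ u v : V20, contractMap u = a ∧ contractMap v = b ∧ G20plus.Adj u v)

lemma G20plus_adj_inl_inl {i j : ZMod 18} (h : i ≠ j) : G20plus.Adj (.inl i) (.inl j) :=
  .inl ⟨by simpa using h, .inl h⟩

lemma G20plus_adj_inl_x (i : ZMod 18) : G20plus.Adj (.inl i) (.inr 0) :=
  .inl ⟨by simp, .inl (.inl rfl)⟩

/-- The one of `y₀, y₁` adjacent to `i` in `G₂₀`; through it `i` becomes adjacent to `y` after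
contracting. -/
def yOf (i : ZMod 18) : Fin 3 := if Even i.val then 1 else 2

lemma contractMap_yOf (i : ZMod 18) : contractMap (.inr (yOf i)) = .inr 1 := by
  unfold yOf; split_ifs <;> rfl

lemma G20plus_adj_inl_yOf (i : ZMod 18) : G20plus.Adj (.inl i) (.inr (yOf i)) := by
  refine .inl ⟨by simp, .inl (.inr ?_)⟩
  unfold yOf
  split_ifs with h
  exacts [.inl ⟨rfl, h⟩, .inr ⟨rfl, h⟩]

lemma G20plus_adj_x_y₀ : G20plus.Adj (.inr 0) (.inr 1) :=
  .inr ⟨by decide, .inl ⟨rfl, rfl⟩⟩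

lemma K20_adj_of_G20plus_adj {u v : V20} (h : G20plus.Adj u v)
    (hne : contractMap u ≠ contractMap v) : K20.Adj (contractMap u) (contractMap v) :=
  (SimpleGraph.fromRel_adj _ _ _).mpr ⟨hne, .inl ⟨u, v, rfl, rfl, h⟩⟩

lemma K20_adj_inl (i : ZMod 18) {b : V20c} (hb : .inl i ≠ b) : K20.Adj (.inl i) b := by
  match b with
  | .inl j => exact K20_adj_of_G20plus_adj (G20plus_adj_inl_inl (by simpa using hb)) hb
  | .inr 0 => exact K20_adj_of_G20plus_adj (G20plus_adj_inl_x i) hb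
  | .inr 1 =>
    have h := K20_adj_of_G20plus_adj (G20plus_adj_inl_yOf i) (by rwa [contractMap_yOf])
    rwa [contractMap_yOf] at h

lemma K20_eq_top : K20 = ⊤ := by
  refine eq_top_iff.mpr fun a b (hab : a ≠ b) => ?_
  match a, b with
  | .inl i, b => exact K20_adj_inl i hab
  | a, .inl j => exact (K20_adj_inl j hab.symm).symm
  | .inr 0, .inr 1 => exact K20_adj_of_G20plus_adj G20plus_adj_x_y₀ (by decide)
  | .inr 1, .inr 0 => exact (K20_adj_of_G20plus_adj G20plus_adj_x_y₀ (by decide)).symm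
  | .inr 0, .inr 0 | .inr 1, .inr 1 => exact absurd rfl hab

theorem stmt_11 : Nonempty (K20 ≃g (⊤ : SimpleGraph (Fin 20))) :=
  ⟨K20_eq_top ▸ .completeGraph (Fintype.equivFinOfCardEq (by simp))⟩
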